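/- arXiv:1911.04476 — 7 statements merged into one kernel-verified Lean document; each statement's English description precedes it below -/
import Mathlib

section
/- For fixed P > 0, define A(n) = P²·cot(π/n)/(4n) for real n > 2 (the area of a regular Euclidean n-gon of perimeter P). Then for all real n ≥ 6, A(n) < 2·A(n/2). -/
open Real

theorem area_doubling (P : ℝ) (hP : 0 < P)
    (A : ℝ → ℝ)
    (hA : ∀ n : ℝ, 2 < n → A n = P ^ 2 * (Real.cos (π / n) / Real.sin (π / n)) / (4 * n))
    (n : ℝ) (hn : 6 ≤ n) :
    A n < 2 * A (n / 2) := by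
  have hn0 : (0:ℝ) < n := by linarith
  have hn2 : (2:ℝ) < n := by linarith
  have hn2' : (2:ℝ) < n / 2 := by linarith
  rw [hA n hn2, hA (n/2) hn2']
  have hπ := Real.pi_pos
  have hπ4 := Real.pi_lt_d2
  have hxd : π / (n / 2) = 2 * (π / n) := by field_simp
  set x := π / n with hxdef
  have hx0 : 0 < x := by positivity
  have hx6 : x ≤ π / 6 := by
    rw [hxdef, div_le_div_iff₀ hn0 (by norm_num)]
    nlinarith
  have hxπ : x < π := by linarith
  have hs : 0 < Real.sin x := Real.sin_pos_of_pos_of_lt_pi hx0 hxπ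
  have hc : Real.sqrt 3 / 2 ≤ Real.cos x := by
    rw [← Real.cos_pi_div_six]
    exact Real.cos_le_cos_of_nonneg_of_le_pi hx0.le (by linarith) hx6
  have h3 : (Real.sqrt 3) ^ 2 = 3 := Real.sq_sqrt (by norm_num)
  have hc2 : (3:ℝ)/4 ≤ Real.cos x ^ 2 := by nlinarith [Real.sqrt_nonneg 3]
  have hc0 : 0 < Real.cos x := by nlinarith [Real.sqrt_nonneg 3]
  have hsc : Real.sin x ^ 2 + Real.cos x ^ 2 = 1 := Real.sin_sq_add_cos_sq x
  rw [hxd, Real.sin_two_mul, Real.cos_two_mul]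
  have key : Real.cos x / Real.sin x < 4 * ((2 * Real.cos x ^ 2 - 1) / (2 * Real.sin x * Real.cos x)) := by
    rw [mul_div_assoc', div_lt_div_iff₀ hs (by positivity)]
    nlinarith
  have h4n : (0:ℝ) < P ^ 2 / (4 * n) := by positivity
  calc P ^ 2 * (Real.cos x / Real.sin x) / (4 * n)
      = P ^ 2 / (4 * n) * (Real.cos x / Real.sin x) := by ring
    _ < P ^ 2 / (4 * n) * (4 * ((2 * Real.cos x ^ 2 - 1) / (2 * Real.sin x * Real.cos x))) :=
        mul_lt_mul_of_pos_left key h4n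
    _ = 2 * (P ^ 2 * ((2 * Real.cos x ^ 2 - 1) / (2 * Real.sin x * Real.cos x)) / (4 * (n / 2))) := by
        field_simp
        ring
end

section
/- For fixed P > 0, the function A(n) = P²·cot(π/n)/(4n) is strictly concave on (2, ∞), i.e., its second derivative with respect to n is negative for all n > 2. -/
/-! Write α = π / n. The first derivative of cot(π/n)/n is (α - sin α cos α)/(n² sin² α), and the
second is 2 (cos α (α² + sin² α) - 2 α sin α)/(n³ sin³ α). For n > 2 we have α ∈ (0, π/2), where
the bracket is negative: α cos α < sin α (that is, α < tan α) times α, plus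
sin α cos α < sin α < α times sin α. Scaling by P²/4 > 0 preserves strict concavity. -/

open Real Set

lemma cos_mul_sq_add_sin_sq_lt {u : ℝ} (hu : u ∈ Ioo 0 (π / 2)) :
    cos u * (u ^ 2 + sin u ^ 2) < 2 * u * sin u := by
  obtain ⟨hu0, hu2⟩ := hu
  have hsin_pos : 0 < sin u := sin_pos_of_pos_of_lt_pi hu0 (by linarith [pi_pos])
  have hcos_pos : 0 < cos u := cos_pos_of_mem_Ioo ⟨by linarith [pi_pos], hu2⟩
  have hsin_lt : sin u < u := sin_lt hu0
  have hmul_cos_lt : u * cos u < sin u := by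
    have := lt_tan hu0 hu2
    rwa [tan_eq_sin_div_cos, lt_div_iff₀ hcos_pos] at this
  have h₁ : cos u * u ^ 2 < u * sin u := by nlinarith
  have h₂ : cos u * sin u ^ 2 < u * sin u := by nlinarith [mul_pos hsin_pos hcos_pos]
  linarith

lemma strictConcaveOn_of_hasDerivAt2_neg {D : Set ℝ} (hD : Convex ℝ D) (hDo : IsOpen D)
    {f f' f'' : ℝ → ℝ} (hf : ∀ x ∈ D, HasDerivAt f (f' x) x)
    (hf' : ∀ x ∈ D, HasDerivAt f' (f'' x) x) (hf'' : ∀ x ∈ D, f'' x < 0) :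
    StrictConcaveOn ℝ D f := by
  have hderiv : D.EqOn (deriv f) f' := fun x hx ↦ (hf x hx).deriv
  have hanti : StrictAntiOn f' D := by
    refine strictAntiOn_of_hasDerivWithinAt_neg hD
      (fun x hx ↦ (hf' x hx).continuousAt.continuousWithinAt) (f' := f'') ?_ ?_ <;>
      rw [hDo.interior_eq]
    · exact fun x hx ↦ (hf' x hx).hasDerivWithinAt
    · exact hf''
  refine StrictAntiOn.strictConcaveOn_of_deriv hD
    (fun x hx ↦ (hf x hx).continuousAt.continuousWithinAt) ?_
  rw [hDo.interior_eq]
  exact fun x hx y hy hxy ↦ by rw [hderiv hx, hderiv hy]; exact hanti hx hy hxy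

lemma StrictConcaveOn.const_mul {E : Type*} [AddCommGroup E] [Module ℝ E] {s : Set E}
    {f : E → ℝ} {c : ℝ} (hf : StrictConcaveOn ℝ s f) (hc : 0 < c) :
    StrictConcaveOn ℝ s (fun x ↦ c * f x) :=
  ⟨hf.1, fun x hx y hy hxy a b ha hb hab ↦ by
    simpa only [smul_eq_mul, mul_add, mul_left_comm c] using
      mul_lt_mul_of_pos_left (hf.2 hx hy hxy ha hb hab) hc⟩

lemma pi_div_mem_Ioo_of_two_lt {x : ℝ} (hx : 2 < x) : π / x ∈ Ioo 0 (π / 2) :=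
  ⟨div_pos pi_pos (by linarith), div_lt_div_of_pos_left pi_pos two_pos hx⟩

lemma hasDerivAt_pi_div {x : ℝ} (hx : x ≠ 0) :
    HasDerivAt (fun n : ℝ ↦ π / n) (-(π / x) / x) x :=
  ((hasDerivAt_const x π).div (hasDerivAt_id x) hx).congr_deriv <| by
    simp only [id]; field_simp; ring

lemma hasDerivAt_cot_pi_div_div {x : ℝ} (hx : x ≠ 0) (hs : sin (π / x) ≠ 0) :
    HasDerivAt (fun n : ℝ ↦ cos (π / n) / sin (π / n) / n)
      ((π / x - sin (π / x) * cos (π / x)) / (x ^ 2 * sin (π / x) ^ 2)) x := by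
  have hα := hasDerivAt_pi_div hx
  refine ((((hasDerivAt_cos _).comp x hα).div ((hasDerivAt_sin _).comp x hα) hs).div
    (hasDerivAt_id x) hx).congr_deriv ?_
  simp only [Function.comp_apply, Pi.div_apply, id]
  field_simp
  linear_combination π * sin_sq_add_cos_sq (π / x)

lemma hasDerivAt_deriv_cot_pi_div_div {x : ℝ} (hx : x ≠ 0) (hs : sin (π / x) ≠ 0) :
    HasDerivAt (fun n : ℝ ↦ (π / n - sin (π / n) * cos (π / n)) / (n ^ 2 * sin (π / n) ^ 2))
      (2 * (cos (π / x) * ((π / x) ^ 2 + sin (π / x) ^ 2) - 2 * (π / x) * sin (π / x)) /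
        (x ^ 3 * sin (π / x) ^ 3)) x := by
  have hα := hasDerivAt_pi_div hx
  have hcos := (hasDerivAt_cos _).comp x hα
  have hsin := (hasDerivAt_sin _).comp x hα
  refine ((hα.sub (hsin.mul hcos)).div ((hasDerivAt_pow 2 x).mul (hsin.pow 2))
    (mul_ne_zero (pow_ne_zero 2 hx) (pow_ne_zero 2 hs))).congr_deriv ?_
  simp only [Function.comp_apply, Pi.mul_apply, Pi.pow_apply, Pi.sub_apply]
  field_simp
  linear_combination (-π * x * sin (π / x) ^ 2) * sin_sq_add_cos_sq (π / x)

lemma strictConcaveOn_cot_pi_div_div :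
    StrictConcaveOn ℝ (Ioi 2) (fun n : ℝ ↦ cos (π / n) / sin (π / n) / n) := by
  have hpos : ∀ x ∈ Ioi (2 : ℝ), 0 < x ∧ 0 < sin (π / x) := fun x hx ↦
    have hα := pi_div_mem_Ioo_of_two_lt hx
    ⟨by linarith [mem_Ioi.mp hx], sin_pos_of_pos_of_lt_pi hα.1 (by linarith [hα.2, pi_pos])⟩
  refine strictConcaveOn_of_hasDerivAt2_neg (convex_Ioi 2) isOpen_Ioi
    (fun x hx ↦ hasDerivAt_cot_pi_div_div (hpos x hx).1.ne' (hpos x hx).2.ne')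
    (fun x hx ↦ hasDerivAt_deriv_cot_pi_div_div (hpos x hx).1.ne' (hpos x hx).2.ne')
    fun x hx ↦ ?_
  obtain ⟨hx0, hsin⟩ := hpos x hx
  have hbracket := cos_mul_sq_add_sin_sq_lt (pi_div_mem_Ioo_of_two_lt hx)
  exact div_neg_of_neg_of_pos (by linarith) (by positivity)

theorem area_strictConcave (P : ℝ) (hP : 0 < P) :
    StrictConcaveOn ℝ (Set.Ioi (2 : ℝ))
      (fun n : ℝ => P ^ 2 * (Real.cos (π / n) / Real.sin (π / n)) / (4 * n)) :=
  (strictConcaveOn_cot_pi_div_div.const_mul (by positivity : 0 < P ^ 2 / 4)).congr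
    fun n _ ↦ by ring
end

section
/- For fixed P > 0, the function A(n) = P²·cot(π/n)/(4n) is strictly increasing on (2, ∞). -/
/-!
Writing `x = π / n`, the area is `P² / (4π) · x cot x`, and `n ↦ π / n` is decreasing, so it
suffices that `x cot x` is strictly decreasing on `(0, π)`. Its derivative is
`(sin x cos x - x) / sin² x`, whose numerator `sin (2x) / 2 - x` is negative for `x > 0`.
-/

open Real Set

theorem Real.sin_mul_cos_lt_self {x : ℝ} (hx : 0 < x) : sin x * cos x < x := by
  have h := sin_lt (by linarith : 0 < 2 * x)
  rw [sin_two_mul] at h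
  linarith

theorem Real.hasDerivAt_mul_cos_div_sin {x : ℝ} (hx : sin x ≠ 0) :
    HasDerivAt (fun x => x * cos x / sin x) ((sin x * cos x - x) / sin x ^ 2) x := by
  refine (((hasDerivAt_id' x).mul (hasDerivAt_cos x)).div (hasDerivAt_sin x) hx).congr_deriv ?_
  simp only [Pi.mul_apply]
  linear_combination (-x / sin x ^ 2) * sin_sq_add_cos_sq x

theorem Real.strictAntiOn_mul_cos_div_sin :
    StrictAntiOn (fun x => x * cos x / sin x) (Ioo 0 π) := by
  have sin_ne_zero : ∀ x ∈ Ioo 0 π, sin x ≠ 0 := fun x hx => (sin_pos_of_mem_Ioo hx).ne'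
  refine strictAntiOn_of_deriv_neg (convex_Ioo 0 π) ?_ fun x hx => ?_
  · exact fun x hx =>
      (hasDerivAt_mul_cos_div_sin (sin_ne_zero x hx)).continuousAt.continuousWithinAt
  rw [interior_Ioo] at hx
  rw [(hasDerivAt_mul_cos_div_sin (sin_ne_zero x hx)).deriv]
  exact div_neg_of_neg_of_pos (by linarith [sin_mul_cos_lt_self hx.1])
    (pow_pos (sin_pos_of_mem_Ioo hx) 2)

theorem area_eq_mul_mul_cos_div_sin (P n : ℝ) :
    P ^ 2 * (cos (π / n) / sin (π / n)) / (4 * n) =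
      P ^ 2 / (4 * π) * (π / n * cos (π / n) / sin (π / n)) := by
  field_simp

theorem area_strictMono (P : ℝ) (hP : 0 < P) :
    StrictMonoOn
      (fun n : ℝ => P ^ 2 * (Real.cos (π / n) / Real.sin (π / n)) / (4 * n))
      (Set.Ioi (2 : ℝ)) := by
  have pi_div_mem : ∀ n ∈ Ioi (2 : ℝ), π / n ∈ Ioo 0 π := fun n (hn : 2 < n) =>
    ⟨by positivity, div_lt_self pi_pos (by linarith)⟩
  intro a ha b hb hab
  simp only [area_eq_mul_mul_cos_div_sin]
  have hba : π / b < π / a := div_lt_div_of_pos_left pi_pos (by linarith [mem_Ioi.mp ha]) hab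
  exact mul_lt_mul_of_pos_left
    (strictAntiOn_mul_cos_div_sin (pi_div_mem b hb) (pi_div_mem a ha) hba) (by positivity)
end

section
/- For 0 < α ≤ π/2, one has 2·cos(α)·(sin²(α) + α²) − 4·α·sin(α) < 0, and the expression equals 0 at α = 0. -/
open Real

theorem aux_expr_neg :
    (∀ α : ℝ, 0 < α → α ≤ π / 2 →
      2 * Real.cos α * (Real.sin α ^ 2 + α ^ 2) - 4 * α * Real.sin α < 0) ∧
    2 * Real.cos 0 * (Real.sin 0 ^ 2 + (0 : ℝ) ^ 2) - 4 * 0 * Real.sin 0 = 0 := by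
  constructor
  · intro α hα hα2
    have hs : 0 < Real.sin α := Real.sin_pos_of_pos_of_lt_pi hα (lt_of_le_of_lt hα2 (by linarith [Real.pi_pos]))
    have hsa : Real.sin α < α := Real.sin_lt hα
    have hc : α * Real.cos α < Real.sin α := by
      rcases lt_or_eq_of_le hα2 with h | h
      · have ht := Real.lt_tan hα h
        have hcpos : 0 < Real.cos α := Real.cos_pos_of_mem_Ioo ⟨by linarith [Real.pi_pos], h⟩
        rw [Real.tan_eq_sin_div_cos, lt_div_iff₀ hcpos] at ht
        linarith
      · rw [h, Real.cos_pi_div_two]; simpa using hs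
    nlinarith [sq_nonneg (Real.sin α), sq_nonneg α, mul_pos hα hs, mul_pos hs hs]
  · simp
end

section
/- Let k₁, k₂, k₃ be nonnegative integers, not all zero, and suppose (α₁, α₂, α₃) is a point of the open set B = {θ ∈ ℝ³ : θᵢ > 0, θ₁+θ₂+θ₃ < π} satisfying k₁α₁ + k₂α₂ + k₃α₃ = 2π. Then there exists (α₁′, α₂′, α₃′) ∈ B with k₁α₁′ + k₂α₂′ + k₃α₃′ = 2π such that for every triple of nonnegative integers (k₁′, k₂′, k₃′) ≠ (k₁, k₂, k₃) we have k₁′α₁′ + k₂′α₂′ + k₃′α₃′ ≠ 2π, and moreover α₁′, α₂′, α₃′ are pairwise distinct. -/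
open Real

/-- Root set of a (not identically zero) quadratic is finite. -/
lemma quad_roots_finite (c₀ c₁ c₂ : ℝ) (h : ¬(c₀ = 0 ∧ c₁ = 0 ∧ c₂ = 0)) :
    {t : ℝ | c₀ + c₁ * t + c₂ * t ^ 2 = 0}.Finite := by
  set p : Polynomial ℝ :=
    Polynomial.C c₀ + Polynomial.C c₁ * Polynomial.X + Polynomial.C c₂ * Polynomial.X ^ 2 with hp
  have e0 : p.coeff 0 = c₀ := by simp [hp]
  have e1 : p.coeff 1 = c₁ := by simp [hp]
  have e2 : p.coeff 2 = c₂ := by simp [hp, Polynomial.coeff_X_pow]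
  have hpne : p ≠ 0 := by
    intro h0
    exact h ⟨by rw [← e0, h0]; simp, by rw [← e1, h0]; simp, by rw [← e2, h0]; simp⟩
  have hfin := Polynomial.finite_setOf_isRoot hpne
  have hset : {t : ℝ | c₀ + c₁ * t + c₂ * t ^ 2 = 0} = {x | p.IsRoot x} := by
    ext t
    simp only [Polynomial.IsRoot, hp, Set.mem_setOf_eq, Polynomial.eval_add,
      Polynomial.eval_mul, Polynomial.eval_pow, Polynomial.eval_C, Polynomial.eval_X]
  rw [hset]
  exact hfin

theorem exists_scalene_triangle (k₁ k₂ k₃ : ℕ) (hk : ¬(k₁ = 0 ∧ k₂ = 0 ∧ k₃ = 0))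
    (α₁ α₂ α₃ : ℝ) (h1 : 0 < α₁) (h2 : 0 < α₂) (h3 : 0 < α₃)
    (hsum : α₁ + α₂ + α₃ < π)
    (heq : (k₁ : ℝ) * α₁ + k₂ * α₂ + k₃ * α₃ = 2 * π) :
    ∃ α₁' α₂' α₃' : ℝ,
      0 < α₁' ∧ 0 < α₂' ∧ 0 < α₃' ∧ α₁' + α₂' + α₃' < π ∧
      (k₁ : ℝ) * α₁' + k₂ * α₂' + k₃ * α₃' = 2 * π ∧
      (∀ k₁' k₂' k₃' : ℕ, (k₁', k₂', k₃') ≠ (k₁, k₂, k₃) →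
        (k₁' : ℝ) * α₁' + k₂' * α₂' + k₃' * α₃' ≠ 2 * π) ∧
      α₁' ≠ α₂' ∧ α₁' ≠ α₃' ∧ α₂' ≠ α₃' := by
  have ha : (0:ℝ) ≤ (k₁ : ℝ) := Nat.cast_nonneg _
  set a : ℝ := (k₁ : ℝ)
  set b : ℝ := (k₂ : ℝ)
  set c : ℝ := (k₃ : ℝ)
  have hs : 0 < a + b + c := by
    have hne : k₁ + k₂ + k₃ ≠ 0 := by omega
    have h0 : (0 : ℝ) < ((k₁ + k₂ + k₃ : ℕ) : ℝ) :=
      Nat.cast_pos.mpr (Nat.pos_of_ne_zero hne)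
    push_cast at h0
    linarith
  -- the quadratic curve inside the plane k·θ = 2π
  set f₁ : ℝ → ℝ := fun t => α₁ + t * (b + c) - t ^ 2 * b with hf₁
  set f₂ : ℝ → ℝ := fun t => α₂ - t * a + t ^ 2 * (a + c) with hf₂
  set f₃ : ℝ → ℝ := fun t => α₃ - t * a - t ^ 2 * b with hf₃
  have hcont₁ : Continuous f₁ := by fun_prop
  have hcont₂ : Continuous f₂ := by fun_prop
  have hcont₃ : Continuous f₃ := by fun_prop
  -- the curve stays in the plane
  have hplane : ∀ t : ℝ, a * f₁ t + b * f₂ t + c * f₃ t = 2 * π := by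
    intro t
    simp only [hf₁, hf₂, hf₃]
    linear_combination heq
  -- good open neighborhood where the point stays in B
  set U : Set ℝ := {t : ℝ | 0 < f₁ t ∧ 0 < f₂ t ∧ 0 < f₃ t ∧ f₁ t + f₂ t + f₃ t < π} with hUdef
  have hopen : IsOpen U := by
    have o1 : IsOpen {t : ℝ | 0 < f₁ t} := isOpen_lt continuous_const hcont₁
    have o2 : IsOpen {t : ℝ | 0 < f₂ t} := isOpen_lt continuous_const hcont₂
    have o3 : IsOpen {t : ℝ | 0 < f₃ t} := isOpen_lt continuous_const hcont₃
    have o4 : IsOpen {t : ℝ | f₁ t + f₂ t + f₃ t < π} :=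
      isOpen_lt (by fun_prop) continuous_const
    exact o1.inter (o2.inter (o3.inter o4))
  have hU0 : (0 : ℝ) ∈ U := by
    simp only [hUdef, Set.mem_setOf_eq, hf₁, hf₂, hf₃]
    norm_num
    exact ⟨h1, h2, h3, hsum⟩
  obtain ⟨δ, hδpos, hball⟩ := Metric.mem_nhds_iff.mp (hopen.mem_nhds hU0)
  -- the countable bad set
  set T : Set ℝ :=
    (⋃ K : ℕ × ℕ × ℕ, {t : ℝ | K ≠ (k₁, k₂, k₃) ∧
        (K.1 : ℝ) * f₁ t + (K.2.1 : ℝ) * f₂ t + (K.2.2 : ℝ) * f₃ t = 2 * π}) ∪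
      ({t : ℝ | f₁ t = f₂ t} ∪ ({t : ℝ | f₁ t = f₃ t} ∪ {t : ℝ | f₂ t = f₃ t})) with hTdef
  have hTcount : T.Countable := by
    refine Set.Countable.union ?_ (Set.Countable.union ?_ (Set.Countable.union ?_ ?_))
    · refine Set.countable_iUnion fun K => ?_
      obtain ⟨p', q', r'⟩ := K
      by_cases hKk : (p', q', r') = (k₁, k₂, k₃)
      · simp [hKk]
      set p : ℝ := (p' : ℝ)
      set q : ℝ := (q' : ℝ)
      set r : ℝ := (r' : ℝ)
      have hsub : {t : ℝ | (p', q', r') ≠ (k₁, k₂, k₃) ∧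
          p * f₁ t + q * f₂ t + r * f₃ t = 2 * π} ⊆
          {t : ℝ | (p * α₁ + q * α₂ + r * α₃ - 2 * π) +
            (p * (b + c) - a * (q + r)) * t +
            (-(p * b) + q * (a + c) - r * b) * t ^ 2 = 0} := by
        intro t ht
        simp only [Set.mem_setOf_eq, hf₁, hf₂, hf₃] at ht ⊢
        linear_combination ht.2
      refine (Set.Finite.subset ?_ hsub).countable
      refine quad_roots_finite _ _ _ ?_
      rintro ⟨hc0, hc1, hc2⟩
      apply hKk
      have hps : p * (a + b + c) = a * (p + q + r) := by linear_combination hc1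
      have hqs : q * (a + b + c) = b * (p + q + r) := by linear_combination hc2
      have hrs : r * (a + b + c) = c * (p + q + r) := by linear_combination -hc1 - hc2
      have hsum2 : (p + q + r) * (2 * π) = (a + b + c) * (2 * π) := by
        linear_combination -(p + q + r) * heq + (a + b + c) * hc0 - α₁ * hps - α₂ * hqs - α₃ * hrs
      have hpqr : p + q + r = a + b + c :=
        mul_right_cancel₀ (by positivity) hsum2
      have hp' : p = a := by
        have : p * (a + b + c) = a * (a + b + c) := by rw [hps, hpqr]
        exact mul_right_cancel₀ (ne_of_gt hs) this
      have hq' : q = b := by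
        have : q * (a + b + c) = b * (a + b + c) := by rw [hqs, hpqr]
        exact mul_right_cancel₀ (ne_of_gt hs) this
      have hr' : r = c := by
        have : r * (a + b + c) = c * (a + b + c) := by rw [hrs, hpqr]
        exact mul_right_cancel₀ (ne_of_gt hs) this
      have e1 : p' = k₁ := Nat.cast_injective hp'
      have e2 : q' = k₂ := Nat.cast_injective hq'
      have e3 : r' = k₃ := Nat.cast_injective hr'
      simp [e1, e2, e3]
    · have hsub : {t : ℝ | f₁ t = f₂ t} ⊆
          {t : ℝ | (α₁ - α₂) + (a + b + c) * t + (-(a + b + c)) * t ^ 2 = 0} := by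
        intro t ht
        simp only [Set.mem_setOf_eq, hf₁, hf₂] at ht ⊢
        linear_combination ht
      refine (Set.Finite.subset (quad_roots_finite _ _ _ ?_) hsub).countable
      rintro ⟨-, hc1, -⟩; linarith
    · have hsub : {t : ℝ | f₁ t = f₃ t} ⊆
          {t : ℝ | (α₁ - α₃) + (a + b + c) * t + (0:ℝ) * t ^ 2 = 0} := by
        intro t ht
        simp only [Set.mem_setOf_eq, hf₁, hf₃] at ht ⊢
        linear_combination ht
      refine (Set.Finite.subset (quad_roots_finite _ _ _ ?_) hsub).countable
      rintro ⟨-, hc1, -⟩; linarith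
    · have hsub : {t : ℝ | f₂ t = f₃ t} ⊆
          {t : ℝ | (α₂ - α₃) + (0:ℝ) * t + (a + b + c) * t ^ 2 = 0} := by
        intro t ht
        simp only [Set.mem_setOf_eq, hf₂, hf₃] at ht ⊢
        linear_combination ht
      refine (Set.Finite.subset (quad_roots_finite _ _ _ ?_) hsub).countable
      rintro ⟨-, -, hc2⟩; linarith
  -- find a good parameter
  have hne : (Set.Ioo (0:ℝ) δ \ T).Nonempty := by
    have hT0 : MeasureTheory.volume T = 0 := hTcount.measure_zero _
    have hdiff : MeasureTheory.volume (Set.Ioo (0:ℝ) δ \ T) = MeasureTheory.volume (Set.Ioo (0:ℝ) δ) :=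
      MeasureTheory.measure_diff_null hT0
    have hpos : MeasureTheory.volume (Set.Ioo (0:ℝ) δ \ T) ≠ 0 := by
      rw [hdiff, Real.volume_Ioo]
      simp only [ne_eq, ENNReal.ofReal_eq_zero, not_le]
      linarith
    exact MeasureTheory.nonempty_of_measure_ne_zero hpos
  obtain ⟨t, ⟨htl, htr⟩, htT⟩ := hne
  have htU : t ∈ U := hball (by
    simp only [Metric.mem_ball, Real.dist_eq, sub_zero]
    rw [abs_of_pos htl]; exact htr)
  obtain ⟨hg1, hg2, hg3, hgsum⟩ := htU
  refine ⟨f₁ t, f₂ t, f₃ t, hg1, hg2, hg3, hgsum, hplane t, ?_, ?_, ?_, ?_⟩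
  · intro p' q' r' hne' habs
    apply htT
    rw [hTdef]
    left
    exact Set.mem_iUnion.mpr ⟨(p', q', r'), ⟨hne', habs⟩⟩
  · intro h; exact htT (by rw [hTdef]; right; left; exact h)
  · intro h; exact htT (by rw [hTdef]; right; right; left; exact h)
  · intro h; exact htT (by rw [hTdef]; right; right; right; exact h)
end

section
/- If in a tiling of a flat torus by N convex polygons Q_i* each has perimeter at most P, the polygons cover the torus (so Σ Area(Q_i*) ≥ N·A where A is the area of the regular hexagon of perimeter P), the average number of sides satisfies (1/N)Σ nᵢ ≤ 6, and Area(Q_i*) ≤ A(nᵢ) where A(n) = P²cot(π/n)/(4n) (extended by 0 on [0,2]), then Σ A(nᵢ) ≤ N·A(6) = N·A, with equality forcing every nᵢ = 6. -/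
/-!
Writing `t = π / n`, one has `A(n) = P² / (4π²) · n ψ(π / n)` with `ψ(t) = t² cot t`, i.e. `A` is
(up to a constant) the perspective of `ψ`. Since `ψ` is strictly concave on `(0, π/2)`, multiplying
its tangent-line inequality at `π / 6` by `n` shows that `A` lies strictly below an increasing
line through `(6, A(6))`, except at `n = 6`; on `[0, 2]` the line is positive. Summing this
inequality over the polygons and using that the average of the `nᵢ` is at most `6` gives the bound
and its equality case.
-/

open Real

/-- The area of a regular Euclidean `n`-gon of perimeter `P`, extended by 0 on `[0,2]`. -/
noncomputable def Afun (P n : ℝ) : ℝ :=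
  if n ≤ 2 then 0 else P ^ 2 * (Real.cos (π / n) / Real.sin (π / n)) / (4 * n)

open Set

lemma StrictConcaveOn.lt_add_mul_sub_of_hasDerivAt {S : Set ℝ} {f : ℝ → ℝ} {f' a x : ℝ}
    (hf : StrictConcaveOn ℝ S f) (ha : a ∈ S) (hx : x ∈ S) (hxa : x ≠ a)
    (hfa : HasDerivAt f f' a) : f x < f a + f' * (x - a) := by
  rcases hxa.lt_or_gt with hlt | hlt
  · have h := hf.lt_slope_of_hasDerivAt hx ha hlt hfa
    rw [slope_def_field, lt_div_iff₀ (sub_pos.2 hlt)] at h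
    linarith
  · have h := hf.slope_lt_of_hasDerivAt ha hx hlt hfa
    rw [slope_def_field, div_lt_iff₀ (sub_pos.2 hlt)] at h
    linarith

noncomputable def sqMulCot (t : ℝ) : ℝ := t ^ 2 * cos t / sin t

noncomputable def sqMulCot' (t : ℝ) : ℝ := (2 * t * cos t * sin t - t ^ 2) / sin t ^ 2

lemma hasDerivAt_sqMulCot {t : ℝ} (h : sin t ≠ 0) : HasDerivAt sqMulCot (sqMulCot' t) t := by
  have h1 : HasDerivAt (fun t ↦ t ^ 2 * cos t) (2 * t * cos t + t ^ 2 * -sin t) t := by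
    simpa using (hasDerivAt_pow 2 t).fun_mul (hasDerivAt_cos t)
  refine (h1.div (hasDerivAt_sin t) h).congr_deriv ?_
  rw [sqMulCot']
  field_simp
  linear_combination -t ^ 2 * sin_sq_add_cos_sq t

lemma hasDerivAt_sqMulCot' {t : ℝ} (h : sin t ≠ 0) :
    HasDerivAt sqMulCot'
      (2 * (sin t ^ 2 * cos t - 2 * t * sin t + t ^ 2 * cos t) / sin t ^ 3) t := by
  have h1 : HasDerivAt (fun t ↦ 2 * t * cos t * sin t - t ^ 2)
      ((2 * cos t + 2 * t * -sin t) * sin t + 2 * t * cos t * cos t - 2 * t) t := by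
    have h2 : HasDerivAt (fun t ↦ 2 * t * cos t) (2 * cos t + 2 * t * -sin t) t := by
      simpa using ((hasDerivAt_id t).const_mul 2).fun_mul (hasDerivAt_cos t)
    simpa using (h2.fun_mul (hasDerivAt_sin t)).fun_sub (hasDerivAt_pow 2 t)
  have h3 : HasDerivAt (fun t ↦ sin t ^ 2) (2 * sin t * cos t) t := by
    simpa [mul_comm, mul_assoc] using (hasDerivAt_sin t).fun_pow 2
  refine (h1.div h3 (pow_ne_zero 2 h)).congr_deriv ?_
  field_simp
  linear_combination -(t * sin t) * sin_sq_add_cos_sq t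

lemma sin_pos_of_mem_Ioo_zero_pi_div_two {t : ℝ} (ht : t ∈ Ioo 0 (π / 2)) : 0 < sin t :=
  sin_pos_of_pos_of_lt_pi ht.1 (ht.2.trans (by linarith [pi_pos]))

lemma sq_sin_mul_cos_sub_add_sq_mul_cos_neg {t : ℝ} (ht : t ∈ Ioo 0 (π / 2)) :
    sin t ^ 2 * cos t - 2 * t * sin t + t ^ 2 * cos t < 0 := by
  have hs := sin_pos_of_mem_Ioo_zero_pi_div_two ht
  have hc : 0 < cos t := cos_pos_of_mem_Ioo ⟨by linarith [ht.1, pi_pos], ht.2⟩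
  have hsc : sin t * cos t < t :=
    (mul_le_of_le_one_right hs.le (cos_le_one t)).trans_lt (sin_lt ht.1)
  have htc : t * cos t < sin t := by
    have := lt_tan ht.1 ht.2
    rwa [tan_eq_sin_div_cos, lt_div_iff₀ hc] at this
  nlinarith [mul_lt_mul_of_pos_left hsc hs, mul_lt_mul_of_pos_left htc ht.1]

lemma strictConcaveOn_sqMulCot : StrictConcaveOn ℝ (Ioo 0 (π / 2)) sqMulCot := by
  have hsin {t} (ht : t ∈ Ioo 0 (π / 2)) := (sin_pos_of_mem_Ioo_zero_pi_div_two ht).ne'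
  refine strictConcaveOn_of_deriv2_neg' (convex_Ioo _ _)
    (fun t ht ↦ (hasDerivAt_sqMulCot (hsin ht)).continuousAt.continuousWithinAt) fun t ht ↦ ?_
  have hderiv : deriv sqMulCot =ᶠ[nhds t] sqMulCot' := by
    filter_upwards [isOpen_Ioo.mem_nhds ht] with s hs using (hasDerivAt_sqMulCot (hsin hs)).deriv
  rw [Function.iterate_succ_apply, Function.iterate_one, hderiv.deriv_eq,
    (hasDerivAt_sqMulCot' (hsin ht)).deriv]
  exact div_neg_of_neg_of_pos (by linarith [sq_sin_mul_cos_sub_add_sq_mul_cos_neg ht])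
    (pow_pos (sin_pos_of_mem_Ioo_zero_pi_div_two ht) 3)

lemma Afun_eq_mul_sqMulCot (P : ℝ) {x : ℝ} (hx : 2 < x) :
    Afun P x = P ^ 2 / (4 * π ^ 2) * (x * sqMulCot (π / x)) := by
  rw [Afun, if_neg hx.not_ge, sqMulCot]
  field_simp

lemma mul_sqMulCot_pi_div_lt {a x : ℝ} (ha : a ∈ Ioo 0 (π / 2)) (hx : 2 < x) (hxa : π / x ≠ a) :
    x * sqMulCot (π / x) < sqMulCot a * x + sqMulCot' a * (π - a * x) := by
  have hx0 : 0 < x := by linarith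
  have hmem : π / x ∈ Ioo 0 (π / 2) :=
    ⟨by positivity, div_lt_div_of_pos_left pi_pos two_pos hx⟩
  have htangent := strictConcaveOn_sqMulCot.lt_add_mul_sub_of_hasDerivAt ha hmem hxa
    (hasDerivAt_sqMulCot (sin_pos_of_mem_Ioo_zero_pi_div_two ha).ne')
  calc x * sqMulCot (π / x) < x * (sqMulCot a + sqMulCot' a * (π / x - a)) :=
        mul_lt_mul_of_pos_left htangent hx0
    _ = sqMulCot a * x + sqMulCot' a * (π - a * x) := by field_simp

lemma sqMulCot_pi_div_six : sqMulCot (π / 6) = π ^ 2 * √3 / 36 := by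
  rw [sqMulCot, cos_pi_div_six, sin_pi_div_six]; ring

lemma sqMulCot'_pi_div_six : sqMulCot' (π / 6) = π * √3 / 3 - π ^ 2 / 9 := by
  rw [sqMulCot', cos_pi_div_six, sin_pi_div_six]; ring

/-- The slope of the tangent line to `Afun P` at `6`. -/
noncomputable def hexagonSlope (P : ℝ) : ℝ :=
  P ^ 2 / (4 * π ^ 2) * (sqMulCot (π / 6) - π / 6 * sqMulCot' (π / 6))

lemma hexagonSlope_pos {P : ℝ} (hP : 0 < P) : 0 < hexagonSlope P := by
  have h3 : √3 < 2 := (sqrt_lt' two_pos).2 (by norm_num)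
  have h : 0 < π ^ 2 * (2 * π - 3 * √3) := mul_pos (by positivity) (by linarith [pi_gt_three])
  rw [hexagonSlope, sqMulCot_pi_div_six, sqMulCot'_pi_div_six]
  exact mul_pos (by positivity) (by linarith)

lemma sqMulCot'_pi_div_six_pos : 0 < sqMulCot' (π / 6) := by
  have h3 : 4 / 3 < √3 := (lt_sqrt (by norm_num)).2 (by norm_num)
  have h : 0 < π * (3 * √3 - π) := mul_pos pi_pos (by linarith [pi_lt_four])
  rw [sqMulCot'_pi_div_six]
  linarith

lemma Afun_lt_add_hexagonSlope_mul {P x : ℝ} (hP : 0 < P) (hx : 0 ≤ x) (hx6 : x ≠ 6) :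
    Afun P x < Afun P 6 + hexagonSlope P * (x - 6) := by
  have hline : Afun P 6 + hexagonSlope P * (x - 6) =
      P ^ 2 / (4 * π ^ 2) * (sqMulCot (π / 6) * x + sqMulCot' (π / 6) * (π - π / 6 * x)) := by
    rw [Afun_eq_mul_sqMulCot P (by norm_num), hexagonSlope]; ring
  rw [hline]
  have hc : 0 < P ^ 2 / (4 * π ^ 2) := by positivity
  rcases le_or_gt x 2 with hx2 | hx2
  · rw [Afun, if_pos hx2]
    have hψ : 0 < sqMulCot (π / 6) := by rw [sqMulCot_pi_div_six]; positivity
    have hψ' := sqMulCot'_pi_div_six_pos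
    have hπx : 0 < π - π / 6 * x := by nlinarith [pi_pos]
    positivity
  · rw [Afun_eq_mul_sqMulCot P hx2]
    have ha : π / 6 ∈ Ioo 0 (π / 2) := ⟨by positivity, by linarith [pi_pos]⟩
    refine mul_lt_mul_of_pos_left (mul_sqMulCot_pi_div_lt ha hx2 ?_) hc
    contrapose! hx6
    field_simp at hx6
    linarith

lemma Afun_le_add_hexagonSlope_mul {P x : ℝ} (hP : 0 < P) (hx : 0 ≤ x) :
    Afun P x ≤ Afun P 6 + hexagonSlope P * (x - 6) := by
  rcases eq_or_ne x 6 with rfl | hx6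
  · simp
  · exact (Afun_lt_add_hexagonSlope_mul hP hx hx6).le

theorem hexagon_area_bound_general (P : ℝ) (hP : 0 < P) (N : ℕ)
    (A : ℝ) (hA : A = Afun P 6)
    (nsides : Fin N → ℝ) (hns : ∀ i, 0 ≤ nsides i)
    (havg : (∑ i, nsides i) / N ≤ 6) :
    ∑ i, Afun P (nsides i) ≤ N * Afun P 6 ∧ Afun P 6 = A ∧
    (∑ i, Afun P (nsides i) = N * Afun P 6 → ∀ i, nsides i = 6) := by
  set ℓ : ℝ → ℝ := fun x ↦ Afun P 6 + hexagonSlope P * (x - 6)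
  have hsum : ∑ i, nsides i ≤ N * 6 := by
    rcases N.eq_zero_or_pos with rfl | hN
    · simp
    · rwa [div_le_iff₀ (by positivity), mul_comm] at havg
  have hline : ∑ i, ℓ (nsides i) ≤ N * Afun P 6 := by
    have hℓ : ∑ i, ℓ (nsides i) = N * Afun P 6 + hexagonSlope P * (∑ i, nsides i - N * 6) := by
      simp only [ℓ, Finset.sum_add_distrib, ← Finset.mul_sum, Finset.sum_sub_distrib]
      simp
    rw [hℓ]
    exact add_le_of_nonpos_right
      (mul_nonpos_of_nonneg_of_nonpos (hexagonSlope_pos hP).le (sub_nonpos.2 hsum))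
  have hle i : Afun P (nsides i) ≤ ℓ (nsides i) := Afun_le_add_hexagonSlope_mul hP (hns i)
  refine ⟨(Finset.sum_le_sum fun i _ ↦ hle i).trans hline, hA.symm, fun heq i ↦ ?_⟩
  by_contra hi
  have := Finset.sum_lt_sum (fun j _ ↦ hle j)
    ⟨i, Finset.mem_univ i, Afun_lt_add_hexagonSlope_mul hP (hns i) hi⟩
  linarith

theorem hexagon_area_bound (P : ℝ) (hP : 0 < P) (N : ℕ) (hN : 0 < N)
    (A : ℝ) (hA : A = Afun P 6)
    (nsides area : Fin N → ℝ) (hns : ∀ i, 0 ≤ nsides i)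
    (hcover : (N : ℝ) * A ≤ ∑ i, area i)
    (havg : (∑ i, nsides i) / N ≤ 6)
    (harea : ∀ i, area i ≤ Afun P (nsides i)) :
    ∑ i, Afun P (nsides i) ≤ N * Afun P 6 ∧ Afun P 6 = A ∧
    (∑ i, Afun P (nsides i) = N * Afun P 6 → ∀ i, nsides i = 6) :=
  hexagon_area_bound_general P hP N A hA nsides hns havg
end

section
/- Let A : ℝ → ℝ be strictly concave and strictly increasing on [2, ∞), extended to be 0 on [0, 2], and suppose A(n) < 2A(n/2) for all n ≥ 6. If n₁, …, n_N are nonnegative reals with (1/N)Σnᵢ ≤ 6, then Σ A(nᵢ) ≤ N·A(6), with equality only if all nᵢ = 6. -/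
/-! The right tangent line `ℓ` of `A` at `6` has positive slope since `A` is increasing, and
`ℓ(0) > 0` by the doubling inequality at `6`. Hence `ℓ` lies strictly above the graph of `A` on
`[0, ∞)` away from `6`: on `[0, 2]` because `A` vanishes there, beyond `2` by strict concavity.
Summing `A(nᵢ) ≤ ℓ(nᵢ)` and using `Σ nᵢ ≤ 6N` together with the positive slope bounds the sum,
strictly unless every `nᵢ = 6`. -/

open Set Finset

namespace StrictConcaveOn

variable {S : Set ℝ} {f : ℝ → ℝ} {x y : ℝ}

lemma differentiableWithinAt_Ioi_of_mem_interior (hf : StrictConcaveOn ℝ S f)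
    (hx : x ∈ interior S) : DifferentiableWithinAt ℝ f (Ioi x) x := by
  simpa using (hf.concaveOn.neg.differentiableWithinAt_Ioi_of_mem_interior hx).neg

lemma rightDeriv_lt_slope_of_lt (hf : StrictConcaveOn ℝ S f) (hx : x ∈ interior S)
    (hy : y ∈ S) (hyx : y < x) : derivWithin f (Ioi x) x < slope f y x := by
  have hleft := hf.concaveOn.neg.leftDeriv_le_rightDeriv_of_mem_interior hx
  rw [derivWithin.neg, derivWithin.neg, neg_le_neg_iff] at hleft
  exact hleft.trans_lt <| hf.leftDeriv_lt_slope hy (interior_subset hx) hyx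
    (by simpa using (hf.concaveOn.neg.differentiableWithinAt_Iio_of_mem_interior hx).neg)

lemma lt_add_rightDeriv_mul_sub (hf : StrictConcaveOn ℝ S f) (hx : x ∈ interior S)
    (hy : y ∈ S) (hyx : y ≠ x) : f y < f x + derivWithin f (Ioi x) x * (y - x) := by
  rcases hyx.lt_or_gt with hyx | hxy
  · have h := hf.rightDeriv_lt_slope_of_lt hx hy hyx
    rw [slope_def_field, lt_div_iff₀ (sub_pos.2 hyx)] at h
    linarith
  · have h := hf.slope_lt_rightDeriv (interior_subset hx) hy hxy
      (hf.differentiableWithinAt_Ioi_of_mem_interior hx)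
    rw [slope_def_field, div_lt_iff₀ (sub_pos.2 hxy)] at h
    linarith

end StrictConcaveOn

lemma exists_strict_supporting_line {A : ℝ → ℝ} {a b : ℝ}
    (hconc : StrictConcaveOn ℝ (Ici b) A) (hmono : StrictMonoOn A (Ici b))
    (hzero : ∀ x ∈ Icc 0 b, A x = 0) (hb : 0 < b) (hba : 2 * b ≤ a)
    (hdouble : A a < 2 * A (a / 2)) :
    ∃ s, 0 < s ∧ ∀ x, 0 ≤ x → x ≠ a → A x < A a + s * (x - a) := by
  have ha : a ∈ interior (Ici b) := by rw [interior_Ici]; exact mem_Ioi.2 (by linarith)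
  have hdiff := hconc.differentiableWithinAt_Ioi_of_mem_interior ha
  set s := derivWithin A (Ioi a) a
  have hs_pos : 0 < s := by
    have hslope := hconc.slope_lt_rightDeriv (interior_subset ha)
      (mem_Ici.2 (by linarith) : a + 1 ∈ Ici b) (lt_add_one a) hdiff
    have hA : A a < A (a + 1) := hmono (interior_subset ha) (mem_Ici.2 (by linarith))
      (lt_add_one a)
    rw [slope_def_field, add_sub_cancel_left, div_one] at hslope
    linarith
  have hs_lt : s * a < A a := by
    have hslope := hconc.rightDeriv_lt_slope_of_lt ha (mem_Ici.2 (by linarith) : a / 2 ∈ Ici b)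
      (by linarith)
    rw [slope_def_field, lt_div_iff₀ (by linarith)] at hslope
    linarith
  refine ⟨s, hs_pos, fun x hx hxa => ?_⟩
  rcases le_or_gt x b with hxb | hbx
  · rw [hzero x ⟨hx, hxb⟩]
    nlinarith
  · exact hconc.lt_add_rightDeriv_mul_sub ha (mem_Ici.2 hbx.le) hxa

lemma sum_affine_le_card_mul {ι : Type*} [Fintype ι] {x : ι → ℝ} {a c s : ℝ} (hs : 0 ≤ s)
    (hsum : ∑ i, x i ≤ Fintype.card ι * a) :
    ∑ i, (c + s * (x i - a)) ≤ Fintype.card ι * c := by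
  rw [sum_add_distrib, ← mul_sum, sum_sub_distrib]
  simp only [sum_const, card_univ, nsmul_eq_mul]
  nlinarith

theorem jensen_type_lemma (A : ℝ → ℝ)
    (hconc : StrictConcaveOn ℝ (Set.Ici (2 : ℝ)) A)
    (hmono : StrictMonoOn A (Set.Ici (2 : ℝ)))
    (hzero : ∀ x ∈ Set.Icc (0 : ℝ) 2, A x = 0)
    (hdouble : ∀ n : ℝ, 6 ≤ n → A n < 2 * A (n / 2))
    (N : ℕ) (hN : 0 < N) (n : Fin N → ℝ) (hn : ∀ i, 0 ≤ n i)
    (havg : (∑ i, n i) / N ≤ 6) :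
    ∑ i, A (n i) ≤ N * A 6 ∧ (∑ i, A (n i) = N * A 6 → ∀ i, n i = 6) := by
  obtain ⟨s, hs, hline⟩ := exists_strict_supporting_line hconc hmono hzero two_pos
    (by norm_num) (hdouble 6 le_rfl)
  have hle (i : Fin N) : A (n i) ≤ A 6 + s * (n i - 6) := by
    rcases eq_or_ne (n i) 6 with h | h
    · simp [h]
    · exact (hline _ (hn i) h).le
  have hsum : ∑ i, n i ≤ Fintype.card (Fin N) * 6 := by
    rwa [Fintype.card_fin, ← div_le_iff₀' (by exact_mod_cast hN)]
  have htangent := sum_affine_le_card_mul (c := A 6) hs.le hsum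
  rw [Fintype.card_fin] at htangent
  refine ⟨(sum_le_sum fun i _ => hle i).trans htangent, fun heq i => by_contra fun hne => ?_⟩
  have := sum_lt_sum (fun j _ => hle j) ⟨i, mem_univ i, hline _ (hn i) hne⟩
  linarith
end
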